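/- Let R be a ring, σ an automorphism of R, δ a σ-derivation, S = R[x; σ, δ], and M a right R-module. If m ∈ M ⊗_R S is a good polynomial of degree k with leading coefficient m_k, then the right annihilator of m in S equals σ^{-k}(ann_R(m_k)) · S, i.e., every g = b₀ + b₁x + ⋯ + b_t x^t ∈ S with mg = 0 satisfies σ^k(bᵢ) ∈ ann_R(m_k) for all i, and conversely. -/
import Mathlib


open MulOpposite

/-- `δ` is a `σ`-derivation of the ring `R`. -/
def IsSigmaDeriv {R : Type} [Ring R] (σ : R ≃+* R) (δ : R → R) : Prop :=
  (∀ a b, δ (a + b) = δ a + δ b) ∧ ∀ a b, δ (a * b) = σ a * δ b + δ a * b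

/-- A presentation of the skew polynomial ring `S = R[x; σ, δ]`: `S` is a ring containing an
image of `R` via `ι`, with an element `x` satisfying `x·r = σ(r)·x + δ(r)`, and `S` is free
as a left `R`-module with basis the powers of `x`. -/
structure SkewPoly (R S : Type) [Ring R] [Ring S] (σ : R ≃+* R) (δ : R → R) : Type where
  ι : R →+* S
  x : S
  comm : ∀ r : R, x * ι r = ι (σ r) * x + ι (δ r)
  basis : Function.Bijective fun c : ℕ →₀ R => c.sum fun i a => ι a * x ^ i

/-- A presentation of the induced right `S`-module `M ⊗_R S` of a right `R`-module `M`
(right modules are encoded as modules over the opposite ring): `N` is a right `S`-module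
containing `M` via `j`, compatibly with the right `R`-actions, and every element of `N` is
uniquely a polynomial `∑ (j mᵢ)·xⁱ` with coefficients in `M`. -/
structure Induced (R S M N : Type) [Ring R] [Ring S] [AddCommGroup M] [Module Rᵐᵒᵖ M]
    [AddCommGroup N] [Module Sᵐᵒᵖ N] {σ : R ≃+* R} {δ : R → R}
    (sp : SkewPoly R S σ δ) : Type where
  j : M →+ N
  j_smul : ∀ (r : R) (m : M), j (op r • m) = op (sp.ι r) • j m
  free : Function.Bijective fun c : ℕ →₀ M => c.sum fun i m => op (sp.x ^ i) • j m

variable {R S M N : Type} [Ring R] [Ring S] [AddCommGroup M] [Module Rᵐᵒᵖ M]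
  [AddCommGroup N] [Module Sᵐᵒᵖ N] {σ : R ≃+* R} {δ : R → R}

/-- The polynomial `∑ (j mᵢ)·xⁱ` in `M ⊗_R S` with coefficient family `c`. -/
def pol (sp : SkewPoly R S σ δ) (im : Induced R S M N sp) (c : ℕ →₀ M) : N :=
  c.sum fun i m => op (sp.x ^ i) • im.j m

/-- `ν ∈ M ⊗_R S` has degree exactly `k`. -/
def DegEq (sp : SkewPoly R S σ δ) (im : Induced R S M N sp) (ν : N) (k : ℕ) : Prop :=
  ∃ c : ℕ →₀ M, pol sp im c = ν ∧ c k ≠ 0 ∧ ∀ i, k < i → c i = 0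

/-- `ν` is a good polynomial of degree `k`: whenever `ν·r ≠ 0` for `r ∈ R`,
`deg (ν·r) = deg ν = k`. -/
def GoodAt (sp : SkewPoly R S σ δ) (im : Induced R S M N sp) (ν : N) (k : ℕ) : Prop :=
  DegEq sp im ν k ∧ ∀ r : R, op (sp.ι r) • ν ≠ 0 → DegEq sp im (op (sp.ι r) • ν) k

/-- `ν` is a good polynomial. -/
def Good (sp : SkewPoly R S σ δ) (im : Induced R S M N sp) (ν : N) : Prop :=
  ∃ k, GoodAt sp im ν k


/-! ### Auxiliary machinery for `stmt5` -/

section Stmt5Aux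

variable (sp : SkewPoly R S σ δ) (im : Induced R S M N sp)

/-- `pol` bundled as an additive monoid homomorphism. -/
noncomputable def polHom : (ℕ →₀ M) →+ N :=
  Finsupp.liftAddHom fun i => (DistribMulAction.toAddMonoidHom N (op (sp.x ^ i))).comp im.j

lemma polHom_apply (c : ℕ →₀ M) : polHom sp im c = pol sp im c := rfl

lemma pol_injective : Function.Injective (pol sp im) := im.free.1

lemma pol_zero : pol sp im 0 = 0 := by
  rw [← polHom_apply]; exact map_zero _

lemma pol_single (i : ℕ) (m : M) :
    pol sp im (Finsupp.single i m) = op (sp.x ^ i) • im.j m := by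
  unfold pol
  exact Finsupp.sum_single_index (by simp)

lemma pol_finsuppSum {α : Type} [Zero α] (b : ℕ →₀ α) (h : ℕ → α → (ℕ →₀ M)) :
    pol sp im (b.sum h) = b.sum fun i a => pol sp im (h i a) := by
  rw [← polHom_apply]
  exact map_finsuppSum _ _ _

/-- Multiplication by `xⁱ` on the right shifts coefficients. -/
lemma pol_shift (i : ℕ) (d : ℕ →₀ M) :
    op (sp.x ^ i) • pol sp im d = pol sp im (d.mapDomain (· + i)) := by
  unfold pol
  rw [Finsupp.smul_sum]
  rw [Finsupp.sum_mapDomain_index (by simp) (by intro b m₁ m₂; rw [map_add, smul_add])]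
  refine Finsupp.sum_congr fun n _ => ?_
  rw [smul_smul, ← op_mul, ← pow_add]

/-- Key commutation step: `xⁱ · ι r` acting on `j m` gives a polynomial of degree `≤ i`
with leading coefficient `m · σⁱ(r)`. -/
lemma keyStep : ∀ (i : ℕ) (r : R) (m : M), ∃ d : ℕ →₀ M,
    op (sp.x ^ i * sp.ι r) • im.j m = pol sp im d ∧ d i = op ((⇑σ)^[i] r) • m ∧
      ∀ n, i < n → d n = 0 := by
  intro i
  induction i with
  | zero =>
    intro r m
    refine ⟨Finsupp.single 0 (op r • m), ?_, by simp, ?_⟩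
    · rw [pol_single, pow_zero, one_mul, ← im.j_smul, op_one, one_smul]
    · intro n hn
      rw [Finsupp.single_apply_eq_zero]
      omega
  | succ i ih =>
    intro r m
    obtain ⟨d₁, hd₁, hd₁top, hd₁hi⟩ := ih (σ r) m
    obtain ⟨d₂, hd₂, _, hd₂hi⟩ := ih (δ r) m
    refine ⟨d₁.mapDomain (· + 1) + d₂, ?_, ?_, ?_⟩
    · have hsplit : sp.x ^ (i + 1) * sp.ι r
          = (sp.x ^ i * sp.ι (σ r)) * sp.x + sp.x ^ i * sp.ι (δ r) := by
        rw [pow_succ, mul_assoc, sp.comm r, mul_add, ← mul_assoc]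
      rw [hsplit, op_add, add_smul, op_mul, mul_smul, hd₁, hd₂]
      have := pol_shift sp im 1 d₁
      rw [pow_one] at this
      rw [this, ← polHom_apply, ← polHom_apply, ← polHom_apply, ← map_add]
    · rw [Finsupp.add_apply]
      have h1 : d₁.mapDomain (· + 1) (i + 1) = d₁ i :=
        Finsupp.mapDomain_apply (add_left_injective 1) d₁ i
      rw [h1, hd₁top, hd₂hi (i + 1) (Nat.lt_succ_self i), add_zero,
        Function.iterate_succ_apply]
    · intro n hn
      rw [Finsupp.add_apply, hd₂hi n (by omega)]
      have : n = (n - 1) + 1 := by omega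
      rw [this, Finsupp.mapDomain_apply (add_left_injective 1) d₁ (n - 1),
        hd₁hi (n - 1) (by omega), add_zero]

variable {ν : N} {k : ℕ} {c : ℕ →₀ M}

/-- Right multiplication by `r ∈ R` on a polynomial of degree `≤ k`. -/
lemma mulCoeff (hc : pol sp im c = ν) (htop : ∀ i, k < i → c i = 0) (r : R) :
    ∃ d : ℕ →₀ M, op (sp.ι r) • ν = pol sp im d ∧ d k = op ((⇑σ)^[k] r) • c k ∧
      ∀ n, k < n → d n = 0 := by
  classical
  choose D hD hDk hDtop using fun i m => keyStep sp im i r m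
  refine ⟨c.sum fun i m => D i m, ?_, ?_, ?_⟩
  · have hlhs : op (sp.ι r) • pol sp im c
        = c.sum fun i m => op (sp.x ^ i * sp.ι r) • im.j m := by
      unfold pol
      rw [Finsupp.smul_sum]
      exact Finsupp.sum_congr fun i _ => by rw [smul_smul, ← op_mul]
    rw [← hc, hlhs, pol_finsuppSum sp im]
    exact Finsupp.sum_congr fun i _ => hD i (c i)
  · rw [Finsupp.sum_apply, Finsupp.sum]
    by_cases hmem : k ∈ c.support
    · refine (Finset.sum_eq_single k (fun i hi hne => ?_) (fun h => absurd hmem h)).trans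
        (hDk k (c k))
      have hik : i ≤ k := by
        by_contra h
        exact (Finsupp.mem_support_iff.mp hi) (htop i (by omega))
      exact hDtop i (c i) k (by omega)
    · have hck : c k = 0 := Finsupp.notMem_support_iff.mp hmem
      rw [hck, smul_zero]
      refine Finset.sum_eq_zero fun i hi => ?_
      have hik : i ≤ k := by
        by_contra h
        exact (Finsupp.mem_support_iff.mp hi) (htop i (by omega))
      rcases eq_or_lt_of_le hik with rfl | hlt
      · show (D i (c i)) i = 0
        rw [hDk, hck, smul_zero]
      · exact hDtop i (c i) k hlt
  · intro n hn
    rw [Finsupp.sum_apply, Finsupp.sum]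
    refine Finset.sum_eq_zero fun i hi => ?_
    have hik : i ≤ k := by
      by_contra h
      exact (Finsupp.mem_support_iff.mp hi) (htop i (by omega))
    exact hDtop i (c i) n (by omega)

/-- The crucial equivalence: `ν · r = 0 ↔ σᵏ(r) annihilates the leading coefficient`. -/
lemma ann_iff (hc : pol sp im c = ν) (htop : ∀ i, k < i → c i = 0)
    (hgood : GoodAt sp im ν k) (r : R) :
    op (sp.ι r) • ν = 0 ↔ op ((⇑σ)^[k] r) • c k = 0 := by
  obtain ⟨d, hd, hdk, hdtop⟩ := mulCoeff sp im hc htop r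
  constructor
  · intro h
    have h0 : d = 0 := pol_injective sp im (by rw [← hd, h, pol_zero sp im])
    rw [← hdk, h0]
    simp
  · intro h
    by_contra hne
    obtain ⟨c₂, hc₂, hc₂k, _⟩ := hgood.2 r hne
    rw [hd] at hc₂
    exact hc₂k (by rw [pol_injective sp im hc₂, hdk, h])

/-- The right action of a polynomial `g = ∑ ι(bᵢ)xⁱ` on `ν`, as a sum of monomial actions. -/
lemma act_sum (b : ℕ →₀ R) :
    op (b.sum fun i a => sp.ι a * sp.x ^ i) • ν
      = b.sum fun i a => op (sp.x ^ i) • (op (sp.ι a) • ν) := by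
  have hφ : ∀ s t : S, op (s + t) • ν = op s • ν + op t • ν := by
    intro s t; rw [op_add, add_smul]
  let φ : S →+ N :=
    { toFun := fun s => op s • ν
      map_zero' := by simp
      map_add' := hφ }
  have : φ (b.sum fun i a => sp.ι a * sp.x ^ i)
      = b.sum fun i a => φ (sp.ι a * sp.x ^ i) := map_finsuppSum _ _ _
  refine this.trans (Finsupp.sum_congr fun i _ => ?_)
  show op (sp.ι (b i) * sp.x ^ i) • ν = _
  rw [op_mul, mul_smul]

end Stmt5Aux

/-- if `m` is a good polynomial of degree `k` with leading coefficient `m_k`, then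
`ann_S(m) = σ⁻ᵏ(ann_R(m_k))·S`: a polynomial `g = ∑ bᵢxⁱ ∈ S` satisfies `m·g = 0` if and only
if `σᵏ(bᵢ) ∈ ann_R(m_k)` for all `i`. -/
theorem stmt5 (sp : SkewPoly R S σ δ) (im : Induced R S M N sp) (hδ : IsSigmaDeriv σ δ)
    (ν : N) (k : ℕ) (c : ℕ →₀ M) (hc : pol sp im c = ν) (hk : c k ≠ 0)
    (htop : ∀ i, k < i → c i = 0) (hgood : GoodAt sp im ν k) :
    ∀ b : ℕ →₀ R,
      (op (b.sum fun i a => sp.ι a * sp.x ^ i) • ν = 0 ↔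
        ∀ i, op ((⇑σ)^[k] (b i)) • c k = 0) := by
  have hann := ann_iff sp im hc htop hgood
  intro b
  constructor
  · intro H
    suffices hsuff : ∀ i, op (sp.ι (b i)) • ν = 0 by
      intro i; exact (hann (b i)).mp (hsuff i)
    rw [act_sum sp (ν := ν) b] at H
    have key : ∀ t (b : ℕ →₀ R), (∀ i, t ≤ i → b i = 0) →
        (b.sum fun i a => op (sp.x ^ i) • (op (sp.ι a) • ν)) = 0 →
        ∀ i, op (sp.ι (b i)) • ν = 0 := by
      intro t
      induction t with
      | zero =>
        intro b hb _ i
        rw [hb i (Nat.zero_le i)]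
        simp
      | succ t ih =>
        intro b hb H i
        have hbt : op (sp.ι (b t)) • ν = 0 := by
          by_cases hbt0 : b t = 0
          · rw [hbt0]; simp
          · refine (hann (b t)).mpr ?_
            choose D hD hDk hDtop using fun r => mulCoeff sp im hc htop r
            have hrw : (b.sum fun i a => op (sp.x ^ i) • (op (sp.ι a) • ν))
                = pol sp im (b.sum fun i a => (D a).mapDomain (· + i)) := by
              rw [pol_finsuppSum sp im]
              refine (Finsupp.sum_congr fun i _ => ?_).symm
              rw [hD, pol_shift]
            rw [hrw] at H
            have hE : (b.sum fun i a => (D a).mapDomain (· + i)) = 0 :=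
              pol_injective sp im (by rw [H, pol_zero sp im])
            have hEkt : (b.sum fun i a => (D a).mapDomain (· + i)) (k + t) = 0 := by
              rw [hE]; rfl
            have hval : (b.sum fun i a => (D a).mapDomain (· + i)) (k + t)
                = op ((⇑σ)^[k] (b t)) • c k := by
              rw [Finsupp.sum_apply, Finsupp.sum]
              have hmem : t ∈ b.support := Finsupp.mem_support_iff.mpr hbt0
              refine (Finset.sum_eq_single t (fun i hi hne => ?_)
                (fun h => absurd hmem h)).trans ?_
              · have hit : i ≤ t := by
                  by_contra hgt
                  exact (Finsupp.mem_support_iff.mp hi) (hb i (by omega))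
                have hlt : i < t := lt_of_le_of_ne hit hne
                show ((D (b i)).mapDomain (· + i)) (k + t) = 0
                have heq : k + t = (k + t - i) + i := by omega
                rw [heq, Finsupp.mapDomain_apply (add_left_injective i) _ (k + t - i)]
                exact hDtop (b i) (k + t - i) (by omega)
              · show ((D (b t)).mapDomain (· + t)) (k + t) = _
                rw [Finsupp.mapDomain_apply (add_left_injective t) _ k]
                exact hDk (b t)
            rw [← hval, hEkt]
        have hb' : ∀ i₂, t ≤ i₂ → (b.erase t) i₂ = 0 := by
          intro i₂ hi₂
          rcases eq_or_lt_of_le hi₂ with rfl | hlt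
          · exact Finsupp.erase_same
          · rw [Finsupp.erase_ne (by omega)]
            exact hb i₂ (by omega)
        have Hsplit : (b.sum fun i a => op (sp.x ^ i) • (op (sp.ι a) • ν))
            = ((b.erase t).sum fun i a => op (sp.x ^ i) • (op (sp.ι a) • ν))
              + op (sp.x ^ t) • (op (sp.ι (b t)) • ν) := by
          conv_lhs => rw [← Finsupp.erase_add_single t b]
          rw [Finsupp.sum_add_index' (by intro i; simp)
            (by intro i a₁ a₂; rw [map_add, op_add, add_smul, smul_add])]
          rw [Finsupp.sum_single_index (by simp)]
        have H' : ((b.erase t).sum fun i a => op (sp.x ^ i) • (op (sp.ι a) • ν)) = 0 := by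
          rw [Hsplit, hbt, smul_zero, add_zero] at H
          exact H
        have hall := ih (b.erase t) hb' H'
        rcases eq_or_ne i t with rfl | hne
        · exact hbt
        · have := hall i
          rwa [Finsupp.erase_ne hne] at this
    have hbound : ∀ i, b.support.sup id + 1 ≤ i → b i = 0 := by
      intro i hi
      by_contra h
      have := Finset.le_sup (f := id) (Finsupp.mem_support_iff.mpr h)
      simp only [id] at this
      omega
    exact key (b.support.sup id + 1) b hbound H
  · intro h
    rw [act_sum sp (ν := ν) b]
    refine Finset.sum_eq_zero fun i _ => ?_
    show op (sp.x ^ i) • (op (sp.ι (b i)) • ν) = 0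
    rw [(hann (b i)).mpr (h i), smul_zero]
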